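/- Under the fixed-order modified Metropolis chain, if p(f_{≤i-1}(x)) ≥ p(f_{≤i}(x)) for some i ∈ {1,…,n}, then the state f_i(x) is reachable from x (in at most two full sweeps T = T_n ∘ … ∘ T_1). -/

import Mathlib

/-!
In the first sweep the chain flips every site except `i` and stays put at `i`: every flip has
positive probability, and staying at `i` does too, because at that moment the state is
`f_{≤i-1}(x)`, flipping `i` leads to `f_{≤i}(x)` which does not increase `p`, so the modified
flip probability is `< 1`. This reaches `f_{≤n}(f_i x)`; the second sweep flips every site and
lands on `f_i x`.
-/

open Matrix

/-- Flip the `i`-th coordinate of `x`. -/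
def flipAt {n : ℕ} (i : Fin n) (x : Fin n → Bool) : Fin n → Bool :=
  Function.update x i (!x i)

/-- Flip the first `k` coordinates of `x` (1-indexed coordinates `1..k`). -/
def fle {n : ℕ} (k : ℕ) (x : Fin n → Bool) : Fin n → Bool :=
  fun j => if j.val < k then !x j else x j

/-- Flip coordinates `k..n` (1-indexed) of `x`; `fge (n+1) x = x`. -/
def fge {n : ℕ} (k : ℕ) (x : Fin n → Bool) : Fin n → Bool :=
  fun j => if k ≤ j.val + 1 then !x j else x j

/-- Modified Metropolis flip probability at site `i`. -/
noncomputable def flipMod {n : ℕ} (p : (Fin n → Bool) → ℝ) (i : Fin n)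
    (x : Fin n → Bool) : ℝ :=
  if p x < p (flipAt i x) then 1
  else if p (flipAt i x) < p x then p (flipAt i x) / p x
  else 1 / 2

/-- Standard Metropolis flip probability at site `i`. -/
noncomputable def flipStd {n : ℕ} (p : (Fin n → Bool) → ℝ) (i : Fin n)
    (x : Fin n → Bool) : ℝ :=
  min 1 (p (flipAt i x) / p x)

/-- Single-site transition matrix of the modified Metropolis operator. -/
noncomputable def Tmod {n : ℕ} (p : (Fin n → Bool) → ℝ) (i : Fin n) :
    Matrix (Fin n → Bool) (Fin n → Bool) ℝ :=
  fun x y =>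
    if y = flipAt i x then flipMod p i x
    else if y = x then 1 - flipMod p i x
    else 0

/-- Single-site transition matrix of the standard Metropolis operator. -/
noncomputable def Tstd {n : ℕ} (p : (Fin n → Bool) → ℝ) (i : Fin n) :
    Matrix (Fin n → Bool) (Fin n → Bool) ℝ :=
  fun x y =>
    if y = flipAt i x then flipStd p i x
    else if y = x then 1 - flipStd p i x
    else 0

/-- Full sweep `T = T_n ∘ ⋯ ∘ T_1` (apply `T_1` first) of the modified operators. -/
noncomputable def sweep {n : ℕ} (p : (Fin n → Bool) → ℝ) :
    Matrix (Fin n → Bool) (Fin n → Bool) ℝ :=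
  (List.ofFn (fun i : Fin n => Tmod p i)).prod

/-- Full sweep of the standard Metropolis operators. -/
noncomputable def sweepStd {n : ℕ} (p : (Fin n → Bool) → ℝ) :
    Matrix (Fin n → Bool) (Fin n → Bool) ℝ :=
  (List.ofFn (fun i : Fin n => Tstd p i)).prod


section NonnegMatrix

variable {S R : Type*} [Fintype S] [Semiring R] [PartialOrder R] [IsStrictOrderedRing R]

theorem Matrix.mul_apply_pos_of_nonneg {A B : Matrix S S R}
    (hA : ∀ a b, 0 ≤ A a b) (hB : ∀ a b, 0 ≤ B a b)
    {a b c : S} (hab : 0 < A a b) (hbc : 0 < B b c) : 0 < (A * B) a c :=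
  (mul_pos hab hbc).trans_le <|
    Finset.single_le_sum (fun k _ => mul_nonneg (hA a k) (hB k c)) (Finset.mem_univ b)

variable [DecidableEq S]

theorem Matrix.list_prod_apply_nonneg {L : List (Matrix S S R)} (hL : ∀ M ∈ L, ∀ a b, 0 ≤ M a b)
    (a b : S) : 0 ≤ L.prod a b := by
  induction L generalizing a with
  | nil => simp only [List.prod_nil, Matrix.one_apply]; split_ifs <;> simp
  | cons M L ih =>
    rw [List.prod_cons, Matrix.mul_apply]
    exact Finset.sum_nonneg fun k _ => mul_nonneg (hL M List.mem_cons_self a k)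
      (ih (fun N hN => hL N (List.mem_cons_of_mem M hN)) k)

theorem Matrix.list_ofFn_prod_apply_pos {m : ℕ} {g : Fin m → Matrix S S R} (hg : ∀ k a b, 0 ≤ g k a b)
    {s : ℕ → S} (hs : ∀ k : Fin m, 0 < g k (s k) (s (k + 1))) :
    0 < (List.ofFn g).prod (s 0) (s m) := by
  induction m generalizing s with
  | zero => simp
  | succ m ih =>
    rw [List.ofFn_succ, List.prod_cons]
    refine Matrix.mul_apply_pos_of_nonneg (hg 0) ?_ (hs 0)
      (ih (s := fun k => s (k + 1)) (fun k => hg k.succ) (fun k => hs k.succ))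
    exact Matrix.list_prod_apply_nonneg (by simpa [List.mem_ofFn] using fun k : Fin m => hg k.succ)

end NonnegMatrix

section Flips

variable {n : ℕ}

theorem flipAt_ne (i : Fin n) (x : Fin n → Bool) : flipAt i x ≠ x := fun h => by
  simpa [flipAt] using congrFun h i

@[simp]
theorem fle_zero (x : Fin n → Bool) : fle 0 x = x := by
  funext j; simp [fle]

@[simp]
theorem fle_fle (k : ℕ) (x : Fin n → Bool) : fle k (fle k x) = x := by
  funext j; by_cases hj : j.val < k <;> simp [fle, hj]

theorem flipAt_fle (k : Fin n) (x : Fin n → Bool) : flipAt k (fle k x) = fle (k + 1) x := by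
  funext j
  rcases eq_or_ne j k with rfl | hj
  · simp [flipAt, fle]
  · have : j.val < k + 1 ↔ j.val < k := by have := Fin.val_ne_of_ne hj; omega
    simp [flipAt, fle, Function.update_of_ne hj, this]

theorem fle_succ_flipAt (i : Fin n) (x : Fin n → Bool) : fle (i + 1) (flipAt i x) = fle i x := by
  funext j
  rcases eq_or_ne j i with rfl | hj
  · simp [flipAt, fle]
  · have : j.val < i + 1 ↔ j.val < i := by have := Fin.val_ne_of_ne hj; omega
    simp [flipAt, fle, Function.update_of_ne hj, this]

end Flips

section Metropolis

variable {n : ℕ} {p : (Fin n → Bool) → ℝ}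

theorem flipMod_pos (hp : ∀ x, 0 < p x) (i : Fin n) (x : Fin n → Bool) : 0 < flipMod p i x := by
  unfold flipMod
  split_ifs
  · exact one_pos
  · exact div_pos (hp _) (hp _)
  · exact one_half_pos

theorem flipMod_le_one (hp : ∀ x, 0 < p x) (i : Fin n) (x : Fin n → Bool) : flipMod p i x ≤ 1 := by
  unfold flipMod
  split_ifs with _ hlt
  · exact le_rfl
  · exact ((div_lt_one (hp x)).2 hlt).le
  · norm_num

theorem flipMod_lt_one (hp : ∀ x, 0 < p x) {i : Fin n} {x : Fin n → Bool}
    (hle : p (flipAt i x) ≤ p x) : flipMod p i x < 1 := by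
  rw [flipMod, if_neg hle.not_gt]
  split_ifs with hlt
  · exact (div_lt_one (hp x)).2 hlt
  · norm_num

theorem Tmod_nonneg (hp : ∀ x, 0 < p x) (i : Fin n) (x y : Fin n → Bool) : 0 ≤ Tmod p i x y := by
  unfold Tmod
  split_ifs
  · exact (flipMod_pos hp i x).le
  · exact sub_nonneg.2 (flipMod_le_one hp i x)
  · exact le_rfl

theorem Tmod_apply_flipAt_pos (hp : ∀ x, 0 < p x) (i : Fin n) (x : Fin n → Bool) :
    0 < Tmod p i x (flipAt i x) := by
  simpa [Tmod] using flipMod_pos hp i x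

theorem Tmod_apply_self_pos (hp : ∀ x, 0 < p x) {i : Fin n} {x : Fin n → Bool}
    (hle : p (flipAt i x) ≤ p x) : 0 < Tmod p i x x := by
  simpa [Tmod, (flipAt_ne i x).symm] using flipMod_lt_one hp hle

theorem sweep_nonneg (hp : ∀ x, 0 < p x) (x y : Fin n → Bool) : 0 ≤ sweep p x y :=
  Matrix.list_prod_apply_nonneg (by simpa [List.mem_ofFn] using Tmod_nonneg hp) x y

theorem sweep_apply_pos_of_path (hp : ∀ x, 0 < p x) {s : ℕ → Fin n → Bool}
    (hs : ∀ k : Fin n, 0 < Tmod p k (s k) (s (k + 1))) : 0 < sweep p (s 0) (s n) :=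
  Matrix.list_ofFn_prod_apply_pos (Tmod_nonneg hp) hs

theorem sweep_apply_fle_pos (hp : ∀ x, 0 < p x) (y : Fin n → Bool) :
    0 < sweep p y (fle n y) := by
  simpa using sweep_apply_pos_of_path hp (s := fun k => fle k y) fun k => by
    simpa only [← flipAt_fle] using Tmod_apply_flipAt_pos hp k (fle k y)

theorem sweep_apply_fle_flipAt_pos (hp : ∀ x, 0 < p x) (x : Fin n → Bool) (i : Fin n)
    (h : p (fle (i.val + 1) x) ≤ p (fle i.val x)) :
    0 < sweep p x (fle n (flipAt i x)) := by
  let s : ℕ → Fin n → Bool := fun k => if k ≤ i then fle k x else fle k (flipAt i x)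
  have hs0 : s 0 = x := by simp [s]
  have hsn : s n = fle n (flipAt i x) := by simp [s, i.isLt]
  suffices hs : ∀ k : Fin n, 0 < Tmod p k (s k) (s (k + 1)) by
    simpa only [hs0, hsn] using sweep_apply_pos_of_path hp hs
  intro k
  rcases lt_trichotomy k i with hki | rfl | hik
  · have hk : (k : ℕ) ≤ i := hki.le
    have hk' : (k : ℕ) + 1 ≤ i := hki
    simpa only [s, if_pos hk, if_pos hk', ← flipAt_fle] using Tmod_apply_flipAt_pos hp k _
  · have hk : ¬((k : ℕ) + 1 ≤ k) := by omega
    simp only [s, le_refl, if_true, if_neg hk, fle_succ_flipAt]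
    exact Tmod_apply_self_pos hp (by rwa [flipAt_fle])
  · have hk : ¬((k : ℕ) ≤ i) := by simpa using hik
    have hk' : ¬((k : ℕ) + 1 ≤ i) := by omega
    simpa only [s, if_neg hk, if_neg hk', ← flipAt_fle] using Tmod_apply_flipAt_pos hp k _

end Metropolis

/-- If `p(f_{≤i-1}(x)) ≥ p(f_{≤i}(x))` then `f_i(x)` is reachable from `x`
in at most two full sweeps of the modified Metropolis chain. -/
theorem stmt7 {n : ℕ} (p : (Fin n → Bool) → ℝ) (hp : ∀ x, 0 < p x)
    (x : Fin n → Bool) (i : Fin n)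
    (h : p (fle (i.val + 1) x) ≤ p (fle i.val x)) :
    ∃ k : ℕ, 1 ≤ k ∧ k ≤ 2 ∧ 0 < (sweep p ^ k) x (flipAt i x) := by
  refine ⟨2, one_le_two, le_rfl, ?_⟩
  have second : 0 < sweep p (fle n (flipAt i x)) (flipAt i x) := by
    simpa only [fle_fle] using sweep_apply_fle_pos hp (fle n (flipAt i x))
  rw [pow_two]
  exact Matrix.mul_apply_pos_of_nonneg (sweep_nonneg hp) (sweep_nonneg hp)
    (sweep_apply_fle_flipAt_pos hp x i h) second
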